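/- The q-Seidel triangle entries defined by g_{2n,k}(q) = (-1)^n q^{2C(k-1,2)} L(s^{n+1-k} F_{2k-1}(s,1/q)) for 1 ≤ k ≤ n and g_{2n+1,k}(q) = (-1)^n q^{(k-1)^2} L(s^{n+1-k} F_{2k}(s,1/q)) for 1 ≤ k ≤ n+1, where L is the linear functional with L(F_{2m+1}(s,1/q)) = [m=0], satisfy the recurrences g_{2n,k} = g_{2n,k+1} + q^{k-1} g_{2n-1,k} and g_{2n+1,k} = q^{k-1} g_{2n,k} + g_{2n+1,k-1}, with g_{1,1} = g_{2,1} = 1. -/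
import Mathlib
set_option synthInstance.maxHeartbeats 1000000
set_option maxHeartbeats 1000000


noncomputable section

/-- The field ℚ(q) of rational functions, with q an indeterminate. -/
abbrev K : Type := RatFunc ℚ

/-- The indeterminate q. -/
def q : K := RatFunc.X

/-- The q-integer [n]_q. -/
def qint (n : ℕ) : K := ∑ i ∈ Finset.range n, q ^ i

/-- The q-factorial. -/
def qfact : ℕ → K
  | 0 => 1
  | n + 1 => qint (n + 1) * qfact n

/-- The Gaussian binomial coefficient. -/
def qbinom (n k : ℕ) : K := qfact n / (qfact k * qfact (n - k))

/-- The (Carlitz) q-Fibonacci polynomials: F_0 = 0, F_1 = 1,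
F_n(s,q) = F_{n-1}(s,q) + q^{n-3} s F_{n-2}(s,q). -/
def qFib : ℕ → Polynomial K
  | 0 => 0
  | 1 => 1
  | n + 2 => qFib (n + 1) + Polynomial.C (q ^ ((n : ℤ) - 1)) * Polynomial.X * qFib n

/-- The q-Fibonacci polynomials with q replaced by 1/q. -/
def qFibInv : ℕ → Polynomial K
  | 0 => 0
  | 1 => 1
  | n + 2 => qFibInv (n + 1) + Polynomial.C (q ^ (1 - (n : ℤ))) * Polynomial.X * qFibInv n

open Polynomial

lemma hq : (q:K) ≠ 0 := RatFunc.X_ne_zero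

lemma LCmul (L : Polynomial K →ₗ[K] K) (a : K) (p : Polynomial K) :
    L (Polynomial.C a * p) = a * L p := by
  rw [← Polynomial.smul_eq_C_mul, map_smul, smul_eq_mul]

lemma qFibInv_add_two (n : ℕ) : qFibInv (n+2) = qFibInv (n+1) + Polynomial.C (q ^ (1 - (n:ℤ))) * Polynomial.X * qFibInv n := by
  rw [qFibInv]

lemma keyE (L : Polynomial K →ₗ[K] K) (j m : ℕ) :
    L (X^(m+1) * qFibInv (2*j+1)) =
      q^(2*j) * (L (X^m * qFibInv (2*j+3)) - L (X^m * qFibInv (2*j+2))) := by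
  have h := qFibInv_add_two (2*j+1)
  have h2 : qFibInv (2*j+3) - qFibInv (2*j+2) = Polynomial.C (q ^ (1 - (2*j+1:ℕ):ℤ)) * Polynomial.X * qFibInv (2*j+1) := by
    rw [show 2*j+3 = (2*j+1)+2 by omega] at *
    rw [h]; ring
  rw [← map_sub, ← mul_sub, h2,
    show X^m * (Polynomial.C (q ^ (1 - (2*j+1:ℕ):ℤ)) * X * qFibInv (2*j+1))
       = Polynomial.C (q ^ (1 - (2*j+1:ℕ):ℤ)) * (X^(m+1) * qFibInv (2*j+1)) by ring,
    LCmul, ← mul_assoc, ← zpow_natCast q (2*j), ← zpow_add₀ hq,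
    show ((2*j:ℕ):ℤ) + (1 - ((2*j+1:ℕ):ℤ)) = 0 by push_cast; ring, zpow_zero, one_mul]

lemma keyO (L : Polynomial K →ₗ[K] K) (j m : ℕ) :
    L (X^m * qFibInv (2*j+2)) =
      L (X^m * qFibInv (2*j+1)) + q^(1 - (2*j:ℕ):ℤ) * L (X^(m+1) * qFibInv (2*j)) := by
  have h := qFibInv_add_two (2*j)
  rw [show 2*j+2 = (2*j)+2 by omega, h, mul_add, map_add,
    show X^m * (Polynomial.C (q ^ (1 - (2*j:ℕ):ℤ)) * X * qFibInv (2*j))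
       = Polynomial.C (q ^ (1 - (2*j:ℕ):ℤ)) * (X^(m+1) * qFibInv (2*j)) by ring,
    LCmul]

lemma sq_eq (j : ℕ) : j^2 = 2 * j.choose 2 + j := by
  induction j with
  | zero => rfl
  | succ n ih =>
    have hc : (n+1).choose 2 = n.choose 1 + n.choose 2 := Nat.choose_succ_succ n 1
    have h1 : n.choose 1 = n := Nat.choose_one_right n
    have hsq : (n+1)^2 = n^2 + 2*n + 1 := by ring
    omega

lemma choose_succ (j : ℕ) : 2 * (j+1).choose 2 = 2 * j.choose 2 + 2*j := by
  have hc : (j+1).choose 2 = j.choose 1 + j.choose 2 := Nat.choose_succ_succ j 1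
  have h1 : j.choose 1 = j := Nat.choose_one_right j
  omega


/-- The q-Seidel triangle entries defined through the linear functional L
satisfy the recurrences of the q-Seidel triangle. -/
theorem stmt18 (L : Polynomial K →ₗ[K] K)
    (hL : ∀ m : ℕ, L (qFibInv (2 * m + 1)) = if m = 0 then 1 else 0)
    (ge go : ℕ → ℕ → K)
    (hge : ∀ n k : ℕ, ge n k =
      if 1 ≤ k ∧ k ≤ n then
        (-1) ^ n * q ^ (2 * (k - 1).choose 2) *
          L (Polynomial.X ^ (n + 1 - k) * qFibInv (2 * k - 1))
      else 0)
    (hgo : ∀ n k : ℕ, go n k =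
      if 1 ≤ k ∧ k ≤ n + 1 then
        (-1) ^ n * q ^ ((k - 1) ^ 2) *
          L (Polynomial.X ^ (n + 1 - k) * qFibInv (2 * k))
      else 0) :
    go 0 1 = 1 ∧ ge 1 1 = 1 ∧
    (∀ n k : ℕ, 1 ≤ n → 1 ≤ k → k ≤ n →
      ge n k = ge n (k + 1) + q ^ (k - 1) * go (n - 1) k) ∧
    (∀ n k : ℕ, 1 ≤ n → 1 ≤ k → k ≤ n + 1 →
      go n k = q ^ (k - 1) * ge n k + go n (k - 1)) := by
  have hL1 : L 1 = 1 := by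
    have := hL 0
    norm_num [qFibInv] at this
    exact this
  have hLodd : ∀ j : ℕ, 1 ≤ j → L (qFibInv (2*j+1)) = 0 := fun j hj => by
    have := hL j; rwa [if_neg (by omega)] at this
  have h3p : qFibInv 3 = 1 + Polynomial.X := by norm_num [qFibInv]
  have hLX : L Polynomial.X = -1 := by
    have h := hLodd 1 le_rfl
    rw [show 2*1+1 = 3 by norm_num, h3p, map_add, hL1] at h
    linear_combination h
  refine ⟨?_, ?_, ?_, ?_⟩
  · rw [hgo 0 1]; norm_num [qFibInv, hL1]
  · rw [hge 1 1]; norm_num [qFibInv, hLX]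
  · intro n k hn hk1 hkn
    obtain ⟨j, rfl⟩ : ∃ j, k = j + 1 := ⟨k-1, by omega⟩
    obtain ⟨d, rfl⟩ : ∃ d, n = j + d + 1 := ⟨n - j - 1, by omega⟩
    rw [hge (j+d+1) (j+1), hge (j+d+1) (j+1+1), show (j+d+1) - 1 = j + d by omega,
      hgo (j+d) (j+1), if_pos (by omega : 1 ≤ j+1 ∧ j+1 ≤ j+d+1),
      if_pos (by omega : 1 ≤ j+1 ∧ j+1 ≤ (j+d)+1)]
    simp only [show j+1-1 = j by omega, show j+d+1+1-(j+1) = d+1 by omega,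
      show 2*(j+1)-1 = 2*j+1 by omega, show j+1+1-1 = j+1 by omega,
      show j+d+1+1-(j+1+1) = d by omega, show 2*(j+1+1)-1 = 2*j+3 by omega,
      show j+d+1-(j+1) = d by omega, show 2*(j+1) = 2*j+2 by omega, show 2*j+2-1 = 2*j+1 by omega]
    have hT : (if 1 ≤ j+1+1 ∧ j+1+1 ≤ j+d+1 then
        (-1:K)^(j+d+1) * q^(2*(j+1).choose 2) * L (X^d * qFibInv (2*j+3)) else 0)
        = (-1:K)^(j+d+1) * q^(2*(j+1).choose 2) * L (X^d * qFibInv (2*j+3)) := by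
      rcases Nat.eq_zero_or_pos d with hd | hd
      · subst hd
        rw [if_neg (by omega), pow_zero, one_mul,
          show 2*j+3 = 2*(j+1)+1 by omega, hLodd (j+1) (by omega), mul_zero]
      · rw [if_pos (by omega)]
    rw [hT, keyE L j d, choose_succ j, sq_eq j, pow_add, pow_add, pow_add]
    ring
  · intro n k hn hk1 hkn
    obtain ⟨j, rfl⟩ : ∃ j, k = j + 1 := ⟨k-1, by omega⟩
    obtain ⟨d, rfl⟩ : ∃ d, n = j + d := ⟨n - j, by omega⟩
    rw [hgo (j+d) (j+1), hge (j+d) (j+1), show (j+1) - 1 = j by omega,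
      hgo (j+d) j, if_pos (by omega : 1 ≤ j+1 ∧ j+1 ≤ j+d+1)]
    simp only [show j+d+1-(j+1) = d by omega, show 2*(j+1) = 2*j+2 by omega,
      show 2*(j+1)-1 = 2*j+1 by omega, show j+d+1-j = d+1 by omega, show 2*j+2-1 = 2*j+1 by omega]
    have h1 : (if 1 ≤ j+1 ∧ j+1 ≤ j+d then
        (-1:K)^(j+d) * q^(2*j.choose 2) * L (X^d * qFibInv (2*j+1)) else 0)
        = (-1:K)^(j+d) * q^(2*j.choose 2) * L (X^d * qFibInv (2*j+1)) := by
      rcases Nat.eq_zero_or_pos d with hd | hd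
      · subst hd
        rw [if_neg (by omega), pow_zero, one_mul, hLodd j (by omega), mul_zero]
      · rw [if_pos (by omega)]
    have h2 : (if 1 ≤ j ∧ j ≤ j+d+1 then
        (-1:K)^(j+d) * q^((j-1)^2) * L (X^(d+1) * qFibInv (2*j)) else 0)
        = (-1:K)^(j+d) * (q^(j^2) * q^(1 - (2*j:ℕ):ℤ)) * L (X^(d+1) * qFibInv (2*j)) := by
      rcases Nat.eq_zero_or_pos j with hj | hj
      · subst hj
        rw [if_neg (by omega)]
        norm_num [qFibInv]
      · obtain ⟨i, rfl⟩ : ∃ i, j = i + 1 := ⟨j-1, by omega⟩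
        rw [if_pos (by omega), show i+1-1 = i by omega]
        congr 2
        rw [← zpow_natCast q (i^2), ← zpow_natCast q ((i+1)^2), ← zpow_add₀ hq]
        congr 1
        push_cast; ring
    rw [h1, h2, keyO L j d, sq_eq j, pow_add]
    ring

end
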